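/- Let A be a bounded Krein-self-adjoint operator on H that is non-negative. Then for every λ ∈ ℂ with Im λ ≠ 0 and |λ| ≥ 1, the operator id − λ·A is boundedly invertible and ‖A ∘ (id − λ A)⁻¹‖ ≤ (‖J ∘ A‖ + 2) · |λ|² / |Im λ|². (This expresses that the resolvent of the inverse of a non-negative operator has growth of order 2 at infinity.) -/

import Mathlib

/-! With `T := J A`, Krein-self-adjointness and non-negativity of `A` say exactly that `T ≥ 0`
in the Hilbert-space order. Writing `R := √T` gives `A = J T = (J R) R`, and by Jacobson's lemma
`1 - λ (J R) R` is invertible together with `1 - λ R (J R)`, with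
`A (1 - λ A)⁻¹ = J R (1 - λ S)⁻¹ R` for the self-adjoint `S := R J R`. The numerical-range estimate
`|Im λ| ‖f‖ ≤ |λ| ‖(1 - λ S) f‖` bounds `‖(1 - λ S)⁻¹‖` by `|λ| / |Im λ|`, so
`‖A (1 - λ A)⁻¹‖ ≤ ‖J‖ ‖R‖² |λ| / |Im λ| ≤ ‖T‖ |λ| / |Im λ|` as `‖J‖ ≤ 1`; finally
`|λ| / |Im λ| ≥ 1`. -/

open Filter Topology

noncomputable section

variable {H : Type*} [NormedAddCommGroup H] [InnerProductSpace ℂ H] [CompleteSpace H]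

/-- The indefinite (Krein) inner product `[f,g] = ⟨Jf, g⟩`. -/
def kip (J : H →L[ℂ] H) (f g : H) : ℂ := inner ℂ (J f) g

/-- Krein-self-adjoint bounded operator. -/
def IsKSA (J A : H →L[ℂ] H) : Prop := ∀ f g, kip J (A f) g = kip J f (A g)

section Jacobson

variable {R : Type*} [Ring R] {a b c : R}

theorem one_sub_mul_mul_one_add_mul_mul (h : (1 - b * a) * c = 1) :
    (1 - a * b) * (1 + a * c * b) = 1 := by
  calc (1 - a * b) * (1 + a * c * b) = 1 - a * b + a * ((1 - b * a) * c) * b := by noncomm_ring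
    _ = 1 := by rw [h, mul_one, sub_add_cancel]

theorem one_add_mul_mul_mul_one_sub_mul (h : c * (1 - b * a) = 1) :
    (1 + a * c * b) * (1 - a * b) = 1 := by
  calc (1 + a * c * b) * (1 - a * b) = 1 - a * b + a * (c * (1 - b * a)) * b := by noncomm_ring
    _ = 1 := by rw [h, mul_one, sub_add_cancel]

theorem mul_mul_one_add_mul_mul (h : (1 - b * a) * c = 1) :
    a * b * (1 + a * c * b) = a * c * b := by
  calc a * b * (1 + a * c * b) = a * c * b + a * (1 - (1 - b * a) * c) * b := by noncomm_ring
    _ = a * c * b := by rw [h, sub_self, mul_zero, zero_mul, add_zero]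

end Jacobson

theorem IsSelfAdjoint.isUnit_one_sub_smul {A : Type*} [CStarAlgebra A] {S : A}
    (hS : IsSelfAdjoint S) {lam : ℂ} (him : lam.im ≠ 0) : IsUnit (1 - lam • S) := by
  have hlam : lam ≠ 0 := by rintro rfl; simp at him
  have hspec : lam⁻¹ ∉ spectrum ℂ S := fun h ↦ by
    simpa [Complex.inv_im, hlam, him] using hS.im_eq_zero_of_mem_spectrum h
  have := (spectrum.notMem_iff.mp hspec).smul (Units.mk0 lam hlam)
  convert this using 1
  simp [smul_sub, Algebra.algebraMap_eq_smul_one, hlam]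

theorem IsSelfAdjoint.abs_im_mul_norm_le {S : H →L[ℂ] H} (hS : IsSelfAdjoint S) (lam : ℂ) (f : H) :
    |lam.im| * ‖f‖ ≤ ‖lam‖ * ‖(1 - lam • S) f‖ := by
  have hreal : (inner ℂ (lam • f) (S (lam • f))).im = 0 :=
    (ContinuousLinearMap.isSelfAdjoint_iff_isSymmetric.mp hS).im_inner_self_apply _
  have him : (inner ℂ (lam • f) ((1 - lam • S) f)).im = -lam.im * ‖f‖ ^ 2 := by
    rw [sub_apply, smul_apply, one_apply_eq_self, inner_sub_right, ← map_smul, Complex.sub_im,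
      hreal, inner_smul_left, inner_self_eq_norm_sq_to_K]
    simp [← Complex.ofReal_pow]
  have key : |lam.im| * ‖f‖ ^ 2 ≤ ‖lam‖ * ‖f‖ * ‖(1 - lam • S) f‖ :=
    calc |lam.im| * ‖f‖ ^ 2 = |(inner ℂ (lam • f) ((1 - lam • S) f)).im| := by
          rw [him, abs_mul, abs_neg, abs_of_nonneg (sq_nonneg ‖f‖)]
      _ ≤ ‖inner ℂ (lam • f) ((1 - lam • S) f)‖ := Complex.abs_im_le_norm _
      _ ≤ ‖lam • f‖ * ‖(1 - lam • S) f‖ := norm_inner_le_norm _ _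
      _ = ‖lam‖ * ‖f‖ * ‖(1 - lam • S) f‖ := by rw [norm_smul]
  rcases (norm_nonneg f).eq_or_lt with hf | hf
  · rw [← hf, mul_zero]; positivity
  · nlinarith

theorem IsSelfAdjoint.norm_inverse_one_sub_smul_le {S : H →L[ℂ] H} (hS : IsSelfAdjoint S) {lam : ℂ}
    (him : lam.im ≠ 0) : ‖Ring.inverse (1 - lam • S)‖ ≤ ‖lam‖ / |lam.im| := by
  refine ContinuousLinearMap.opNorm_le_bound _ (by positivity) fun g ↦ ?_
  have hg : (1 - lam • S) (Ring.inverse (1 - lam • S) g) = g := by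
    rw [← mul_apply_eq_comp, Ring.mul_inverse_cancel _ (hS.isUnit_one_sub_smul him),
      one_apply_eq_self]
  have := hS.abs_im_mul_norm_le lam (Ring.inverse (1 - lam • S) g)
  rw [hg] at this
  rw [div_mul_eq_mul_div, le_div_iff₀ (abs_pos.mpr him)]
  linarith

theorem IsSelfAdjoint.norm_le_one_of_mul_self_eq_one {E : Type*} [NormedRing E] [StarRing E]
    [CStarRing E] {J : E} (hJ : IsSelfAdjoint J) (hJJ : J * J = 1) : ‖J‖ ≤ 1 := by
  have hJ1 : ‖J‖ ^ 2 = ‖(1 : E)‖ := by rw [← hJ.norm_mul_self, hJJ]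
  have h11 : ‖(1 : E)‖ ^ 2 = ‖(1 : E)‖ := by rw [← (IsSelfAdjoint.one E).norm_mul_self, mul_one]
  have h1 : ‖(1 : E)‖ ≤ 1 := by nlinarith [norm_nonneg (1 : E)]
  exact (pow_le_one_iff_of_nonneg (norm_nonneg J) two_ne_zero).mp (hJ1 ▸ h1)

theorem IsKSA.nonneg_mul {J A : H →L[ℂ] H} (hA : IsKSA J A) (hJ : IsSelfAdjoint J)
    (hnn : ∀ f : H, 0 ≤ (kip J (A f) f).re) : 0 ≤ J * A := by
  refine (ContinuousLinearMap.nonneg_iff_isPositive _).mpr ⟨fun f g ↦ ?_, hnn⟩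
  calc inner ℂ (J (A f)) g = inner ℂ (J f) (A g) := hA f g
    _ = inner ℂ f (J (A g)) := ContinuousLinearMap.isSelfAdjoint_iff_isSymmetric.mp hJ f (A g)

theorem exists_inverse_one_sub_smul_mul_of_nonneg {J T : H →L[ℂ] H} (hJ : IsSelfAdjoint J)
    (hT : 0 ≤ T) {lam : ℂ} (him : lam.im ≠ 0) :
    ∃ B : H →L[ℂ] H, (1 - lam • (J * T)) * B = 1 ∧ B * (1 - lam • (J * T)) = 1 ∧
      ‖J * T * B‖ ≤ ‖J‖ * ‖T‖ * (‖lam‖ / |lam.im|) := by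
  set R := CFC.sqrt T
  have hR : IsSelfAdjoint R := (CFC.sqrt_nonneg T).isSelfAdjoint
  have hRR : R * R = T := CFC.sqrt_mul_sqrt_self T
  have hS : IsSelfAdjoint (R * (J * R)) := by
    simp only [IsSelfAdjoint, star_mul, hJ.star_eq, hR.star_eq, mul_assoc]
  set C := Ring.inverse (1 - lam • (R * (J * R)))
  have hba : R * (lam • (J * R)) = lam • (R * (J * R)) := mul_smul_comm _ _ _
  have hab : lam • (J * R) * R = lam • (J * T) := by rw [smul_mul_assoc, mul_assoc, hRR]
  have hC₁ : (1 - R * (lam • (J * R))) * C = 1 := by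
    rw [hba]; exact Ring.mul_inverse_cancel _ (hS.isUnit_one_sub_smul him)
  have hC₂ : C * (1 - R * (lam • (J * R))) = 1 := by
    rw [hba]; exact Ring.inverse_mul_cancel _ (hS.isUnit_one_sub_smul him)
  refine ⟨1 + lam • (J * R) * C * R, hab ▸ one_sub_mul_mul_one_add_mul_mul hC₁,
    hab ▸ one_add_mul_mul_mul_one_sub_mul hC₂, ?_⟩
  have hlam : lam ≠ 0 := by rintro rfl; simp at him
  have hAB : J * T * (1 + lam • (J * R) * C * R) = J * R * C * R := by
    apply smul_right_injective _ hlam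
    simpa only [hab, smul_mul_assoc] using mul_mul_one_add_mul_mul hC₁
  have hRn : ‖R‖ ^ 2 = ‖T‖ := by rw [← hR.norm_mul_self, hRR]
  rw [hAB]
  calc ‖J * R * C * R‖ ≤ ‖J‖ * ‖R‖ * ‖C‖ * ‖R‖ := by
        refine (norm_mul_le _ _).trans ?_
        gcongr
        refine (norm_mul_le _ _).trans ?_
        gcongr
        exact norm_mul_le _ _
    _ = ‖J‖ * ‖T‖ * ‖C‖ := by rw [← hRn]; ring
    _ ≤ ‖J‖ * ‖T‖ * (‖lam‖ / |lam.im|) := by gcongr; exact hS.norm_inverse_one_sub_smul_le him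

theorem stmt3 (J A : H →L[ℂ] H) (hJsa : IsSelfAdjoint J) (hJ2 : J ∘L J = 1)
    (hA : IsKSA J A) (hnn : ∀ f : H, 0 ≤ (kip J (A f) f).re) :
    ∀ lam : ℂ, lam.im ≠ 0 → 1 ≤ ‖lam‖ →
      ∃ B : H →L[ℂ] H, (1 - lam • A) ∘L B = 1 ∧ B ∘L (1 - lam • A) = 1 ∧
        ‖A ∘L B‖ ≤ (‖J ∘L A‖ + 2) * ‖lam‖ ^ 2 / |lam.im| ^ 2 := by
  intro lam him _
  obtain ⟨B, hB₁, hB₂, hB⟩ :=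
    exists_inverse_one_sub_smul_mul_of_nonneg hJsa (hA.nonneg_mul hJsa hnn) him
  have hJA : J * (J * A) = A := by rw [← mul_assoc, show J * J = 1 from hJ2, one_mul]
  rw [hJA] at hB₁ hB₂ hB
  have hratio : 1 ≤ ‖lam‖ / |lam.im| :=
    (one_le_div (abs_pos.mpr him)).mpr (Complex.abs_im_le_norm lam)
  refine ⟨B, hB₁, hB₂, ?_⟩
  calc ‖A ∘L B‖ ≤ ‖J‖ * ‖J ∘L A‖ * (‖lam‖ / |lam.im|) := hB
    _ ≤ 1 * ‖J ∘L A‖ * (‖lam‖ / |lam.im|) ^ 2 := by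
        gcongr
        · exact hJsa.norm_le_one_of_mul_self_eq_one hJ2
        · exact le_self_pow₀ hratio two_ne_zero
    _ ≤ (‖J ∘L A‖ + 2) * (‖lam‖ / |lam.im|) ^ 2 := by gcongr; linarith
    _ = (‖J ∘L A‖ + 2) * ‖lam‖ ^ 2 / |lam.im| ^ 2 := by rw [div_pow, mul_div_assoc]
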